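/- arXiv:1208.3624 — 5 statements merged into one kernel-verified Lean document; each statement's English description precedes it below -/
import Mathlib

section
/- Let U ⊆ ℝⁿ and V ⊆ ℝᵐ be open sets, f : U → V and g : V → ℝᵖ be C^k maps (k ≥ 1) with finite C^k norms. Then ‖g ∘ f‖_{C^k} ≤ (1^k + 2^k + ⋯ + k^k) · ‖g‖_{C^k} · max(‖f‖_{C^k}, ‖f‖_{C^k}^k). -/
/-!
Subtracting the constant `g (f x)` from `g` changes no derivative of positive order of `g` or of
`g ∘ f`, so Mathlib's Faà di Bruno bound `‖D^p (g ∘ f)‖ ≤ p! · C · B^p` (for `‖D^i g‖ ≤ C`,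
`‖D^i f‖ ≤ B^i`) applies with `C` bounding `D^i g` only for `1 ≤ i ≤ p`. Given `‖D^i f‖ ≤ K`,
take `B = K` when `K ≥ 1` and `B = K^{1/p}` when `K < 1`; in both cases `B^p ≤ max K (K^k)`.
Finally `p! ≤ p^k ≤ 1^k + ⋯ + k^k`.
-/

open Set
open scoped ContDiff

theorem exists_le_pow_and_pow_le_max {K : ℝ} (hK : 0 ≤ K) {p k : ℕ} (hp : p ≠ 0)
    (hpk : p ≤ k) : ∃ D : ℝ, (∀ i, 1 ≤ i → i ≤ p → K ≤ D ^ i) ∧ D ^ p ≤ max K (K ^ k) := by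
  rcases le_or_gt 1 K with hK1 | hK1
  · exact ⟨K, fun i hi _ => le_self_pow₀ hK1 (by omega),
      (pow_le_pow_right₀ hK1 hpk).trans (le_max_right _ _)⟩
  · set D := K ^ (p : ℝ)⁻¹
    have hDp : D ^ p = K := Real.rpow_inv_natCast_pow hK hp
    have hD1 : D ≤ 1 := Real.rpow_le_one hK hK1.le (by positivity)
    refine ⟨D, fun i _ hip => ?_, hDp.le.trans (le_max_left _ _)⟩
    rw [← hDp]
    exact pow_le_pow_of_le_one (Real.rpow_nonneg hK _) hD1 hip

theorem factorial_le_sum_Icc_pow {p k : ℕ} (hp : 1 ≤ p) (hpk : p ≤ k) :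
    (p.factorial : ℝ) ≤ ∑ i ∈ Finset.Icc 1 k, (i : ℝ) ^ k :=
  calc (p.factorial : ℝ) ≤ (p : ℝ) ^ k := by
        exact_mod_cast p.factorial_le_pow.trans (Nat.pow_le_pow_right hp hpk)
    _ ≤ ∑ i ∈ Finset.Icc 1 k, (i : ℝ) ^ k :=
        Finset.single_le_sum (f := fun i : ℕ => (i : ℝ) ^ k) (fun i _ => by positivity)
          (Finset.mem_Icc.2 ⟨hp, hpk⟩)

section Calculus

variable {𝕜 E F G : Type*} [NontriviallyNormedField 𝕜]
  [NormedAddCommGroup E] [NormedSpace 𝕜 E] [NormedAddCommGroup F] [NormedSpace 𝕜 F]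
  [NormedAddCommGroup G] [NormedSpace 𝕜 G]

theorem iteratedFDerivWithin_sub_const_apply {f : E → F} {s : Set E} {x : E} {i : ℕ}
    (hi : i ≠ 0) (hf : ContDiffWithinAt 𝕜 i f s x) (c : F) (hs : UniqueDiffOn 𝕜 s)
    (hx : x ∈ s) :
    iteratedFDerivWithin 𝕜 i (fun y => f y - c) s x = iteratedFDerivWithin 𝕜 i f s x := by
  have h := iteratedFDerivWithin_sub_apply hf (contDiffWithinAt_const (c := c)) hs hx
  rwa [iteratedFDerivWithin_const_of_ne hi, Pi.zero_apply, sub_zero] at h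

theorem norm_iteratedFDerivWithin_comp_le_of_ne_zero {g : F → G} {f : E → F} {n : ℕ}
    {s : Set E} {t : Set F} {x : E} {N : ℕ∞ω} (hg : ContDiffOn 𝕜 N g t)
    (hf : ContDiffOn 𝕜 N f s) (hn : n ≤ N) (hn0 : n ≠ 0) (ht : UniqueDiffOn 𝕜 t)
    (hs : UniqueDiffOn 𝕜 s) (hst : MapsTo f s t) (hx : x ∈ s) {C D : ℝ}
    (hC : ∀ i, 1 ≤ i → i ≤ n → ‖iteratedFDerivWithin 𝕜 i g t (f x)‖ ≤ C)
    (hD : ∀ i, 1 ≤ i → i ≤ n → ‖iteratedFDerivWithin 𝕜 i f s x‖ ≤ D ^ i) :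
    ‖iteratedFDerivWithin 𝕜 n (g ∘ f) s x‖ ≤ n.factorial * C * D ^ n := by
  set c := g (f x)
  have hfx : f x ∈ t := hst hx
  have hgf_eq : iteratedFDerivWithin 𝕜 n ((fun y => g y - c) ∘ f) s x =
      iteratedFDerivWithin 𝕜 n (g ∘ f) s x :=
    iteratedFDerivWithin_sub_const_apply hn0 ((hg.comp hf hst).of_le hn x hx) c hs hx
  have hC' : ∀ i, i ≤ n → ‖iteratedFDerivWithin 𝕜 i (fun y => g y - c) t (f x)‖ ≤ C := by
    intro i hi
    rcases Nat.eq_zero_or_pos i with rfl | hi0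
    · simpa [norm_iteratedFDerivWithin_zero, c] using
        (norm_nonneg _).trans (hC n (Nat.one_le_iff_ne_zero.2 hn0) le_rfl)
    · rw [iteratedFDerivWithin_sub_const_apply hi0.ne'
        (hg.of_le ((Nat.cast_le.2 hi).trans hn) _ hfx) c ht hfx]
      exact hC i hi0 hi
  rw [← hgf_eq]
  exact norm_iteratedFDerivWithin_comp_le (hg.sub contDiffOn_const) hf hn ht hs hst hx hC' hD

theorem norm_iteratedFDerivWithin_comp_le_factorial_mul_max
    {g : F → G} {f : E → F} {n k : ℕ} {s : Set E} {t : Set F} {x : E} {N : ℕ∞ω}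
    (hg : ContDiffOn 𝕜 N g t) (hf : ContDiffOn 𝕜 N f s) (hn : n ≤ N) (hn0 : n ≠ 0)
    (hnk : n ≤ k) (ht : UniqueDiffOn 𝕜 t) (hs : UniqueDiffOn 𝕜 s) (hst : MapsTo f s t)
    (hx : x ∈ s) {C K : ℝ}
    (hC : ∀ i, 1 ≤ i → i ≤ n → ‖iteratedFDerivWithin 𝕜 i g t (f x)‖ ≤ C)
    (hK : ∀ i, 1 ≤ i → i ≤ n → ‖iteratedFDerivWithin 𝕜 i f s x‖ ≤ K) :
    ‖iteratedFDerivWithin 𝕜 n (g ∘ f) s x‖ ≤ n.factorial * C * max K (K ^ k) := by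
  have hn1 : 1 ≤ n := Nat.one_le_iff_ne_zero.2 hn0
  have hC0 : 0 ≤ C := (norm_nonneg _).trans (hC n hn1 le_rfl)
  obtain ⟨D, hKD, hDmax⟩ :=
    exists_le_pow_and_pow_le_max ((norm_nonneg _).trans (hK n hn1 le_rfl)) hn0 hnk
  calc ‖iteratedFDerivWithin 𝕜 n (g ∘ f) s x‖ ≤ n.factorial * C * D ^ n :=
        norm_iteratedFDerivWithin_comp_le_of_ne_zero hg hf hn hn0 ht hs hst hx hC
          fun i hi hin => (hK i hi hin).trans (hKD i hi hin)
    _ ≤ n.factorial * C * max K (K ^ k) := by gcongr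

end Calculus

theorem ck_norm_comp_general (n m q k : ℕ)
    (U : Set (EuclideanSpace ℝ (Fin n))) (V : Set (EuclideanSpace ℝ (Fin m)))
    (hU : IsOpen U) (hV : IsOpen V)
    (f : EuclideanSpace ℝ (Fin n) → EuclideanSpace ℝ (Fin m))
    (g : EuclideanSpace ℝ (Fin m) → EuclideanSpace ℝ (Fin q))
    (hfUV : MapsTo f U V)
    (hf : ContDiffOn ℝ k f U) (hg : ContDiffOn ℝ k g V)
    (Kf Kg : ℝ)
    (hKf : ∀ p, 1 ≤ p → p ≤ k → ∀ x ∈ U, ‖iteratedFDerivWithin ℝ p f U x‖ ≤ Kf)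
    (hKg : ∀ p, 1 ≤ p → p ≤ k → ∀ y ∈ V, ‖iteratedFDerivWithin ℝ p g V y‖ ≤ Kg) :
    ∀ p, 1 ≤ p → p ≤ k → ∀ x ∈ U,
      ‖iteratedFDerivWithin ℝ p (g ∘ f) U x‖ ≤
        (∑ i ∈ Finset.Icc 1 k, (i : ℝ) ^ k) * Kg * max Kf (Kf ^ k) := by
  intro p hp hpk x hx
  have hKg0 : 0 ≤ Kg := (norm_nonneg _).trans (hKg p hp hpk _ (hfUV hx))
  have hKf0 : 0 ≤ Kf := (norm_nonneg _).trans (hKf p hp hpk x hx)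
  calc ‖iteratedFDerivWithin ℝ p (g ∘ f) U x‖ ≤ p.factorial * Kg * max Kf (Kf ^ k) :=
        norm_iteratedFDerivWithin_comp_le_factorial_mul_max hg hf (by exact_mod_cast hpk)
          (by omega) hpk hV.uniqueDiffOn hU.uniqueDiffOn hfUV hx
          (fun i hi hip => hKg i hi (hip.trans hpk) _ (hfUV hx))
          (fun i hi hip => hKf i hi (hip.trans hpk) x hx)
    _ ≤ (∑ i ∈ Finset.Icc 1 k, (i : ℝ) ^ k) * Kg * max Kf (Kf ^ k) := by
        gcongr
        exact factorial_le_sum_Icc_pow hp hpk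

/-- Composition bound for `C^k` norms: if the `C^k` norms (sup over the open set of
operator norms of the `p`-th derivatives, `1 ≤ p ≤ k`) of `f` and `g` are bounded by
`Kf` and `Kg`, then the `C^k` norm of `g ∘ f` is bounded by
`(1^k + ⋯ + k^k) * Kg * max Kf (Kf^k)`. -/
theorem ck_norm_comp (n m q k : ℕ) (hk : 1 ≤ k)
    (U : Set (EuclideanSpace ℝ (Fin n))) (V : Set (EuclideanSpace ℝ (Fin m)))
    (hU : IsOpen U) (hV : IsOpen V)
    (f : EuclideanSpace ℝ (Fin n) → EuclideanSpace ℝ (Fin m))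
    (g : EuclideanSpace ℝ (Fin m) → EuclideanSpace ℝ (Fin q))
    (hfUV : MapsTo f U V)
    (hf : ContDiffOn ℝ k f U) (hg : ContDiffOn ℝ k g V)
    (Kf Kg : ℝ)
    (hKf : ∀ p, 1 ≤ p → p ≤ k → ∀ x ∈ U, ‖iteratedFDerivWithin ℝ p f U x‖ ≤ Kf)
    (hKg : ∀ p, 1 ≤ p → p ≤ k → ∀ y ∈ V, ‖iteratedFDerivWithin ℝ p g V y‖ ≤ Kg) :
    ∀ p, 1 ≤ p → p ≤ k → ∀ x ∈ U,
      ‖iteratedFDerivWithin ℝ p (g ∘ f) U x‖ ≤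
        (∑ i ∈ Finset.Icc 1 k, (i : ℝ) ^ k) * Kg * max Kf (Kf ^ k) :=
  ck_norm_comp_general n m q k U V hU hV f g hfUV hf hg Kf Kg hKf hKg
end

section
/- Let M be an invertible n × n real matrix and Σ the set of singular (non-invertible) n × n matrices. Then 1/‖M⁻¹‖ = dist(M, Σ), the distance measured in the operator norm. -/
/-! A perturbation of a unit `M` of norm less than `‖M⁻¹‖⁻¹` is still a unit (Neumann series),
so no singular operator is closer to `M` than `‖M⁻¹‖⁻¹`. Conversely, for a unit vector `u`
the operator `M - rankOne (M u) u` kills `u` and lies at distance `‖M u‖` from `M`; taking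
`u` along `M⁻¹ y` gives `dist(M, Σ) · ‖M⁻¹ y‖ ≤ ‖y‖` for every `y`, i.e.
`dist(M, Σ) ≤ ‖M⁻¹‖⁻¹`. -/

open Metric InnerProductSpace

theorem inv_norm_ringInverse_le_infDist_nonunits {R : Type*} [NormedRing R]
    [HasSummableGeomSeries R] {M : R} (hM : IsUnit M) :
    ‖Ring.inverse M‖⁻¹ ≤ infDist M (nonunits R) := by
  obtain ⟨u, rfl⟩ := hM
  rcases subsingleton_or_nontrivial R with hR | hR
  · rw [Subsingleton.elim (Ring.inverse (u : R)) 0, norm_zero, inv_zero]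
    exact infDist_nonneg
  refine (le_infDist ⟨0, zero_mem_nonunits.2 zero_ne_one⟩).2 fun A hA ↦ ?_
  rw [Ring.inverse_unit, dist_comm, dist_eq_norm]
  by_contra! hlt
  exact hA (u.ofNearby A hlt).isUnit

namespace ContinuousLinearMap

theorem not_isUnit_of_apply_eq_zero {R E : Type*} [Semiring R] [TopologicalSpace E]
    [AddCommMonoid E] [Module R E] {A : E →L[R] E} {x : E} (hx : x ≠ 0) (hAx : A x = 0) :
    ¬ IsUnit A := by
  rintro ⟨u, rfl⟩
  have hx0 := congr((↑u⁻¹ : E →L[R] E) $hAx)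
  rw [← mul_apply_eq_comp, Units.inv_mul, one_apply_eq_self, map_zero] at hx0
  exact hx hx0

variable {𝕜 E : Type*} [RCLike 𝕜] [NormedAddCommGroup E] [InnerProductSpace 𝕜 E]

theorem infDist_nonunits_le_norm_apply (M : E →L[𝕜] E) {u : E} (hu : ‖u‖ = 1) :
    infDist M (nonunits (E →L[𝕜] E)) ≤ ‖M u‖ := by
  have hsing : M - rankOne 𝕜 (M u) u ∈ nonunits (E →L[𝕜] E) := by
    refine not_isUnit_of_apply_eq_zero (norm_ne_zero_iff.1 (hu ▸ one_ne_zero)) ?_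
    simp [rankOne_apply, inner_self_eq_norm_sq_to_K, hu]
  calc infDist M (nonunits (E →L[𝕜] E)) ≤ dist M (M - rankOne 𝕜 (M u) u) :=
        infDist_le_dist_of_mem hsing
    _ = ‖M u‖ := by rw [dist_eq_norm, sub_sub_cancel, norm_rankOne, hu, mul_one]

theorem infDist_nonunits_mul_norm_le (M : E →L[𝕜] E) (x : E) :
    infDist M (nonunits (E →L[𝕜] E)) * ‖x‖ ≤ ‖M x‖ := by
  rcases eq_or_ne x 0 with rfl | hx
  · simp
  have hx_pos : 0 < ‖x‖ := norm_pos_iff.2 hx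
  have hu : ‖(‖x‖⁻¹ : 𝕜) • x‖ = 1 := by
    rw [norm_smul, norm_inv, RCLike.norm_ofReal, abs_norm, inv_mul_cancel₀ hx_pos.ne']
  have hle := M.infDist_nonunits_le_norm_apply hu
  rw [map_smul, norm_smul, norm_inv, RCLike.norm_ofReal, abs_norm, inv_mul_eq_div] at hle
  exact (le_div_iff₀ hx_pos).1 hle

theorem infDist_nonunits_le_inv_norm_ringInverse {M : E →L[𝕜] E} (hM : IsUnit M) :
    infDist M (nonunits (E →L[𝕜] E)) ≤ ‖Ring.inverse M‖⁻¹ := by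
  rcases subsingleton_or_nontrivial (E →L[𝕜] E) with hR | hR
  · simp only [nonunits, isUnit_of_subsingleton, not_true, Set.ofPred_false, infDist_empty]
    positivity
  rcases (infDist_nonneg (x := M) (s := nonunits (E →L[𝕜] E))).eq_or_lt with hd | hd
  · rw [← hd]
    positivity
  set d := infDist M (nonunits (E →L[𝕜] E))
  set N := Ring.inverse M
  have hN : ‖N‖ ≤ d⁻¹ := by
    refine opNorm_le_bound _ (inv_nonneg.2 hd.le) fun y ↦ ?_
    have hy := M.infDist_nonunits_mul_norm_le (N y)
    rw [← mul_apply_eq_comp, Ring.mul_inverse_cancel M hM, one_apply_eq_self] at hy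
    rwa [inv_mul_eq_div, le_div_iff₀' hd]
  exact (le_inv_comm₀ hd (norm_pos_iff.2 hM.ringInverse.ne_zero)).2 hN

theorem inv_norm_ringInverse_eq_infDist_nonunits [CompleteSpace E] {M : E →L[𝕜] E}
    (hM : IsUnit M) : ‖Ring.inverse M‖⁻¹ = infDist M (nonunits (E →L[𝕜] E)) :=
  (inv_norm_ringInverse_le_infDist_nonunits hM).antisymm
    (infDist_nonunits_le_inv_norm_ringInverse hM)

end ContinuousLinearMap

/-- Eckart–Young equality: for an invertible linear operator `M` of `ℝⁿ`,
`1/‖M⁻¹‖` equals the (operator-norm) distance from `M` to the set `Σ` of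
singular (non-invertible) operators. -/
theorem eckart_young (n : ℕ)
    (M : EuclideanSpace ℝ (Fin n) →L[ℝ] EuclideanSpace ℝ (Fin n))
    (hM : IsUnit M) :
    1 / ‖Ring.inverse M‖ =
      Metric.infDist M
        {A : EuclideanSpace ℝ (Fin n) →L[ℝ] EuclideanSpace ℝ (Fin n) | ¬ IsUnit A} := by
  rw [one_div]
  exact ContinuousLinearMap.inv_norm_ringInverse_eq_infDist_nonunits hM
end

section
/- Let F : ℝᵐ × ℝⁿ → ℝⁿ be C^k (k ≥ 2) near (0,0) with F(0,0) = 0, ‖F‖_{C^k} ≤ K, and ∂F/∂y(0,0) invertible. Set δ = 1/(2(1 + (1+K)² ‖(∂F/∂y(0,0))⁻¹‖²)^{1/2}) and r = δ/K. Then there exists a C^k map g : B(0, rδ/(2(K+1))) ⊆ ℝᵐ → ℝⁿ with g(0) = 0, F(x, g(x)) = 0 for all x in that ball, and ‖Dg(x)‖ ≤ K/δ for all such x. -/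
/-!
Straighten `F` by `Φ (x, y) = (x, F (x, y))`. Its derivative at the origin is block triangular
with diagonal `(1, ∂ᵧF(0))`, so its inverse has norm at most `max 1 (‖B‖ (1 + K)) ≤ 1 / (2δ)`.
On the ball of radius `r = δ / K` the bound on `D²F` keeps `DΦ` within `δ` of `DΦ(0)`, so `Φ`
is a homeomorphism from that ball onto an open set containing the closed ball of radius `δ ε`
about the origin for every `ε < r`; `ε = r / (2 (K + 1))` gives radius `ρ`. The implicit function
is `g x = (Φ⁻¹ (x, 0)).2`. On the same ball a Neumann series shows that `∂ᵧF` is invertible with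
inverse of norm at most `2‖B‖`; hence `g` is as smooth as `F`, and `Dg = -(∂ᵧF)⁻¹ ∂ₓF` has norm
at most `2‖B‖K ≤ K / δ`.
-/

open Metric Set ContinuousLinearMap

section NontriviallyNormedField

variable {𝕜 E Y : Type*} [NontriviallyNormedField 𝕜]
  [NormedAddCommGroup E] [NormedSpace 𝕜 E] [NormedAddCommGroup Y] [NormedSpace 𝕜 Y]

namespace ContinuousLinearEquiv

theorem coe_refl_skewProd_eq_fst_prod (T : E × Y →L[𝕜] Y) (A : Y ≃L[𝕜] Y)
    (hA : (A : Y →L[𝕜] Y) = T.comp (inr 𝕜 E Y)) :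
    ((ContinuousLinearEquiv.refl 𝕜 E).skewProd A (T.comp (inl 𝕜 E Y)) : E × Y →L[𝕜] E × Y) =
      (fst 𝕜 E Y).prod T := by
  refine ContinuousLinearMap.ext fun p => Prod.ext rfl ?_
  have h := T.map_add (0, p.2) (p.1, 0)
  simp only [Prod.mk_add_mk, zero_add, add_zero] at h
  simpa [skewProd_apply, h] using DFunLike.congr_fun hA p.2

theorem norm_refl_skewProd_symm_le (A : Y ≃L[𝕜] Y) (L : E →L[𝕜] Y) :
    ‖(((ContinuousLinearEquiv.refl 𝕜 E).skewProd A L).symm : E × Y →L[𝕜] E × Y)‖ ≤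
      max 1 (‖(A.symm : Y →L[𝕜] Y)‖ * (1 + ‖L‖)) := by
  refine opNorm_le_bound _ (le_max_of_le_left zero_le_one) fun p => ?_
  rw [coe_coe, skewProd_symm_apply, Prod.norm_def]
  refine max_le ?_ ?_
  · exact (norm_fst_le p).trans (le_mul_of_one_le_left (norm_nonneg _) (le_max_left _ _))
  calc ‖A.symm (p.2 - L p.1)‖ ≤ ‖(A.symm : Y →L[𝕜] Y)‖ * (‖p.2‖ + ‖L‖ * ‖p.1‖) :=
        (A.symm : Y →L[𝕜] Y).le_opNorm _ |>.trans
          (by gcongr; exact (norm_sub_le _ _).trans (by gcongr; exact L.le_opNorm _))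
    _ ≤ ‖(A.symm : Y →L[𝕜] Y)‖ * (1 + ‖L‖) * ‖p‖ := by
        rw [mul_assoc]; gcongr
        nlinarith [norm_fst_le p, norm_snd_le p, norm_nonneg L]
    _ ≤ _ := by gcongr; exact le_max_right _ _

theorem snd_comp_refl_skewProd_symm_comp_inl (A : Y ≃L[𝕜] Y) (L : E →L[𝕜] Y) :
    (snd 𝕜 E Y).comp
        ((((ContinuousLinearEquiv.refl 𝕜 E).skewProd A L).symm : E × Y →L[𝕜] E × Y).comp
          (inl 𝕜 E Y)) =
      -(A.symm : Y →L[𝕜] Y).comp L := by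
  ext u
  simp [skewProd_symm_apply]

theorem exists_eq_of_norm_symm_mul_norm_sub_le [CompleteSpace E]
    (D : E ≃L[𝕜] Y) (M : E →L[𝕜] Y) (h : ‖(D.symm : Y →L[𝕜] E)‖ * ‖M - D‖ ≤ 1 / 2) :
    ∃ M' : E ≃L[𝕜] Y, (M' : E →L[𝕜] Y) = M ∧
      ‖(M'.symm : Y →L[𝕜] E)‖ ≤ 2 * ‖(D.symm : Y →L[𝕜] E)‖ := by
  set B : Y →L[𝕜] E := (D.symm : Y →L[𝕜] E)
  have ht : ‖B.comp ((D : E →L[𝕜] Y) - M)‖ < 1 :=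
    (opNorm_comp_le _ _).trans_lt (by rw [norm_sub_rev]; linarith)
  -- Neumann series: `M = D ∘ (1 - B ∘ (D - M))`
  let M' := (unitsEquiv 𝕜 E (Units.oneSub _ ht)).trans D
  have hM' : (M' : E →L[𝕜] Y) = M := by
    ext v
    simp [M', B]
  refine ⟨M', hM', opNorm_le_bound _ (by positivity) fun w => ?_⟩
  set v := M'.symm w
  have hMv : M v = w := by rw [← hM']; exact M'.apply_symm_apply w
  have : ‖v‖ ≤ ‖B‖ * ‖w‖ + ‖v‖ / 2 :=
    calc ‖v‖ = ‖B (M v - (M - D) v)‖ := by simp [B]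
      _ ≤ ‖B‖ * (‖M v‖ + ‖M - D‖ * ‖v‖) :=
        (B.le_opNorm _).trans
          (by gcongr; exact (norm_sub_le _ _).trans (by gcongr; exact le_opNorm _ _))
      _ ≤ ‖B‖ * ‖w‖ + ‖v‖ / 2 := by rw [hMv, mul_add, ← mul_assoc]; nlinarith [norm_nonneg v]
  change ‖v‖ ≤ _
  linarith

end ContinuousLinearEquiv

theorem ContinuousLinearMap.exists_equiv_fst_prod [CompleteSpace Y] (T T₀ : E × Y →L[𝕜] Y)
    (D : Y ≃L[𝕜] Y) (hD : (D : Y →L[𝕜] Y) = T₀.comp (inr 𝕜 E Y))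
    (h : ‖(D.symm : Y →L[𝕜] Y)‖ * ‖T - T₀‖ ≤ 1 / 2) :
    ∃ L : (E × Y) ≃L[𝕜] (E × Y), (L : E × Y →L[𝕜] E × Y) = (fst 𝕜 E Y).prod T ∧
      ‖(snd 𝕜 E Y).comp ((L.symm : E × Y →L[𝕜] E × Y).comp (inl 𝕜 E Y))‖ ≤
        2 * ‖(D.symm : Y →L[𝕜] Y)‖ * ‖T‖ := by
  have hTD : ‖T.comp (inr 𝕜 E Y) - D‖ ≤ ‖T - T₀‖ := by
    rw [hD, ← sub_comp]
    exact (opNorm_comp_le _ _).trans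
      (mul_le_of_le_one_right (norm_nonneg _) (norm_inr_le_one 𝕜 E Y))
  obtain ⟨M, hM, hMsymm⟩ := D.exists_eq_of_norm_symm_mul_norm_sub_le (T.comp (inr 𝕜 E Y))
    (le_trans (by gcongr) h)
  refine ⟨(ContinuousLinearEquiv.refl 𝕜 E).skewProd M (T.comp (inl 𝕜 E Y)),
    ContinuousLinearEquiv.coe_refl_skewProd_eq_fst_prod T M hM, ?_⟩
  rw [ContinuousLinearEquiv.snd_comp_refl_skewProd_symm_comp_inl, norm_neg]
  calc _ ≤ ‖(M.symm : Y →L[𝕜] Y)‖ * ‖T.comp (inl 𝕜 E Y)‖ := opNorm_comp_le _ _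
    _ ≤ 2 * ‖(D.symm : Y →L[𝕜] Y)‖ * ‖T‖ := by
      gcongr
      exact (opNorm_comp_le _ _).trans
        (mul_le_of_le_one_right (norm_nonneg _) (norm_inl_le_one 𝕜 E Y))

theorem ApproximatesLinearOn.exists_closedBall_subset_target [CompleteSpace E] {f : E → Y}
    {f' : E ≃L[𝕜] Y} {s : Set E} {c : NNReal} (hf : ApproximatesLinearOn f (f' : E →L[𝕜] Y) s c)
    (hs : IsOpen s) (hc : 2 * c * ‖(f'.symm : Y →L[𝕜] E)‖ ≤ 1) {b : E} {ε : ℝ} (hε0 : 0 ≤ ε)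
    (hε : closedBall b ε ⊆ s) :
    ∃ e : OpenPartialHomeomorph E Y, e.source = s ∧ ⇑e = f ∧
      closedBall (f b) (c * ε) ⊆ e.target := by
  rcases f'.subsingleton_or_nnnorm_symm_pos with hE | hN
  · have : Subsingleton Y := (f'.toEquiv.subsingleton_congr).1 hE
    refine ⟨hf.toOpenPartialHomeomorph f s (.inl hE) hs, rfl, rfl, fun y _ => ?_⟩
    rw [Subsingleton.elim y (f b)]
    exact mem_image_of_mem f (hε (mem_closedBall_self hε0))
  · have h2c : c + c ≤ (‖(f'.symm : Y →L[𝕜] E)‖₊)⁻¹ := by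
      rw [NNReal.le_inv_iff_mul_le hN.ne', ← two_mul, ← NNReal.coe_le_coe]
      simpa using hc
    have hc' : c < (‖(f'.symm : Y →L[𝕜] E)‖₊)⁻¹ := by
      rcases eq_or_ne c 0 with rfl | hc0
      · exact inv_pos.2 hN
      · exact (lt_add_of_pos_right c (pos_iff_ne_zero.2 hc0)).trans_le h2c
    refine ⟨hf.toOpenPartialHomeomorph f s (.inr hc') hs, rfl, rfl,
      (closedBall_subset_closedBall ?_).trans (hf.closedBall_subset_target (.inr hc') hs hε0 hε)⟩
    gcongr
    exact le_tsub_of_add_le_left h2c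

theorem norm_fderiv_eq_norm_iteratedFDeriv_one {f : E → Y} {x : E} :
    ‖fderiv 𝕜 f x‖ = ‖iteratedFDeriv 𝕜 1 f x‖ := by
  rw [← norm_iteratedFDeriv_fderiv (n := 0), norm_iteratedFDeriv_zero]

end NontriviallyNormedField

section Real

variable {E Y : Type*} [NormedAddCommGroup E] [NormedSpace ℝ E] [NormedAddCommGroup Y]
  [NormedSpace ℝ Y]

theorem ApproximatesLinearOn.of_norm_hasFDerivWithinAt_sub_le {f : E → Y}
    {f' : E → E →L[ℝ] Y} {φ : E →L[ℝ] Y} {s : Set E} {c : NNReal} (hs : Convex ℝ s)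
    (hf : ∀ x ∈ s, HasFDerivWithinAt f (f' x) s x) (hc : ∀ x ∈ s, ‖f' x - φ‖ ≤ c) :
    ApproximatesLinearOn f φ s c :=
  fun _ hx _ hy => hs.norm_image_sub_le_of_norm_hasFDerivWithin_le' hf hc hy hx

theorem norm_fderiv_sub_le_of_norm_iteratedFDeriv_two_le {f : E → Y} (hf : ContDiff ℝ 2 f)
    {C : ℝ} (hC : ∀ x, ‖iteratedFDeriv ℝ 2 f x‖ ≤ C) (x y : E) :
    ‖fderiv ℝ f x - fderiv ℝ f y‖ ≤ C * ‖x - y‖ :=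
  convex_univ.norm_image_sub_le_of_norm_fderiv_le
    (fun z _ => ((hf.fderiv_right (m := 1) le_rfl).differentiable one_ne_zero) z)
    (fun z _ => by
      rw [norm_fderiv_eq_norm_iteratedFDeriv_one, norm_iteratedFDeriv_fderiv]
      exact hC z)
    (mem_univ y) (mem_univ x)

theorem norm_fst_prod_sub_fst_prod (A B : E × Y →L[ℝ] Y) :
    ‖(fst ℝ E Y).prod A - (fst ℝ E Y).prod B‖ = ‖A - B‖ := by
  have : (fst ℝ E Y).prod A - (fst ℝ E Y).prod B = (0 : E × Y →L[ℝ] E).prod (A - B) := by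
    ext <;> simp
  rw [this, opNorm_prod]
  simp [Prod.norm_def]

variable [CompleteSpace E] [CompleteSpace Y]

theorem exists_openPartialHomeomorph_fst_prod {F : E × Y → Y} (hF : Differentiable ℝ F)
    (D : Y ≃L[ℝ] Y) (hD : (D : Y →L[ℝ] Y) = (fderiv ℝ F 0).comp (inr ℝ E Y)) {δ r ε : ℝ}
    (hδ : 0 ≤ δ) (hδD : 2 * δ * max 1 (‖(D.symm : Y →L[ℝ] Y)‖ * (1 + ‖fderiv ℝ F 0‖)) ≤ 1)
    (hF' : ∀ z ∈ ball (0 : E × Y) r, ‖fderiv ℝ F z - fderiv ℝ F 0‖ ≤ δ)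
    (hε0 : 0 ≤ ε) (hεr : ε < r) :
    ∃ e : OpenPartialHomeomorph (E × Y) (E × Y), e.source = ball 0 r ∧
      ⇑e = (fun p => (p.1, F p)) ∧ closedBall (0, F 0) (δ * ε) ⊆ e.target := by
  set L₀ := (ContinuousLinearEquiv.refl ℝ E).skewProd D ((fderiv ℝ F 0).comp (inl ℝ E Y))
  have hL₀ : (L₀ : E × Y →L[ℝ] E × Y) = (fst ℝ E Y).prod (fderiv ℝ F 0) :=
    ContinuousLinearEquiv.coe_refl_skewProd_eq_fst_prod _ D hD
  have hL₀symm : 2 * δ * ‖(L₀.symm : E × Y →L[ℝ] E × Y)‖ ≤ 1 := by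
    refine le_trans ?_ hδD
    gcongr
    refine (ContinuousLinearEquiv.norm_refl_skewProd_symm_le _ _).trans ?_
    gcongr
    exact (opNorm_comp_le _ _).trans
      (mul_le_of_le_one_right (norm_nonneg _) (norm_inl_le_one ℝ E Y))
  have happrox : ApproximatesLinearOn (fun p : E × Y => (p.1, F p)) (L₀ : E × Y →L[ℝ] E × Y)
      (ball 0 r) ⟨δ, hδ⟩ :=
    .of_norm_hasFDerivWithinAt_sub_le (convex_ball 0 r)
      (fun z _ => (hasFDerivAt_fst.prodMk (hF z).hasFDerivAt).hasFDerivWithinAt)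
      (fun z hz => by rw [hL₀, norm_fst_prod_sub_fst_prod]; exact hF' z hz)
  exact happrox.exists_closedBall_subset_target isOpen_ball hL₀symm hε0
    (closedBall_subset_ball hεr)

theorem exists_implicitFunction_of_norm_fderiv_sub_le {F : E × Y → Y} {n : WithTop ℕ∞}
    (hF : ContDiff ℝ n F) (hn : n ≠ 0) (hF0 : F 0 = 0)
    (D : Y ≃L[ℝ] Y) (hD : (D : Y →L[ℝ] Y) = (fderiv ℝ F 0).comp (inr ℝ E Y)) {δ r ε : ℝ}
    (hδ : 0 ≤ δ) (hδD : 2 * δ * max 1 (‖(D.symm : Y →L[ℝ] Y)‖ * (1 + ‖fderiv ℝ F 0‖)) ≤ 1)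
    (hF' : ∀ z ∈ ball (0 : E × Y) r, ‖fderiv ℝ F z - fderiv ℝ F 0‖ ≤ δ)
    (hε0 : 0 ≤ ε) (hεr : ε < r) :
    ∃ g : E → Y, g 0 = 0 ∧ ∀ x ∈ ball (0 : E) (δ * ε), F (x, g x) = 0 ∧ ContDiffAt ℝ n g x ∧
      ‖fderiv ℝ g x‖ ≤ 2 * ‖(D.symm : Y →L[ℝ] Y)‖ * ‖fderiv ℝ F (x, g x)‖ := by
  have hFd := hF.differentiable hn
  obtain ⟨e, he_source, he, hball⟩ :=
    exists_openPartialHomeomorph_fst_prod hFd D hD hδ hδD hF' hε0 hεr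
  have hDδ : ‖(D.symm : Y →L[ℝ] Y)‖ * δ ≤ 1 / 2 := by
    have : ‖(D.symm : Y →L[ℝ] Y)‖ ≤ max 1 (‖(D.symm : Y →L[ℝ] Y)‖ * (1 + ‖fderiv ℝ F 0‖)) :=
      le_max_of_le_right (le_mul_of_one_le_right (norm_nonneg _)
        (le_add_of_nonneg_right (norm_nonneg _)))
    nlinarith
  refine ⟨fun x => (e.symm (x, 0)).2, ?_, fun x hx => ?_⟩
  · have h0 : e 0 = 0 := by rw [he]; exact Prod.ext rfl hF0
    change (e.symm ((0 : E), (0 : Y))).2 = 0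
    rw [Prod.mk_zero_zero, ← h0, e.left_inv (he_source ▸ mem_ball_self (hε0.trans_lt hεr))]
    rfl
  have hxt : (x, 0) ∈ e.target :=
    hball (by simpa [hF0, Prod.norm_def] using (mem_ball_zero_iff.1 hx).le)
  set z := e.symm (x, 0)
  have hz : (z.1, F z) = (x, 0) := by rw [← e.right_inv hxt, he]
  have hzx : (x, z.2) = z := Prod.ext (congrArg Prod.fst hz).symm rfl
  have hz_ball : z ∈ ball 0 r := he_source ▸ e.map_target hxt
  obtain ⟨L, hL, hL_norm⟩ := (fderiv ℝ F z).exists_equiv_fst_prod (fderiv ℝ F 0) D hD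
    ((mul_le_mul_of_nonneg_left (hF' z hz_ball) (norm_nonneg _)).trans hDδ)
  have he_deriv : HasFDerivAt e (L : E × Y →L[ℝ] E × Y) z := by
    rw [he, hL]; exact hasFDerivAt_fst.prodMk (hFd z).hasFDerivAt
  have he_smooth : ContDiffAt ℝ n e z := by rw [he]; exact (contDiff_fst.prodMk hF).contDiffAt
  refine ⟨hzx ▸ congrArg Prod.snd hz, ?_, ?_⟩
  · exact contDiffAt_snd.comp x
      ((e.contDiffAt_symm hxt he_deriv he_smooth).comp x (contDiff_prodMk_left 0).contDiffAt)
  · have hg : HasFDerivAt (fun x => (e.symm (x, 0)).2)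
        ((snd ℝ E Y).comp ((L.symm : E × Y →L[ℝ] E × Y).comp (inl ℝ E Y))) x :=
      hasFDerivAt_snd.comp x
      ((e.hasFDerivAt_symm hxt he_deriv).comp x (hasFDerivAt_prodMk_left (𝕜 := ℝ) x (0 : Y)))
    rw [hg.fderiv]
    exact hzx ▸ hL_norm

theorem exists_implicitFunction_of_norm_iteratedFDeriv_le {F : E × Y → Y} {n : WithTop ℕ∞}
    (hF : ContDiff ℝ n F) (hn : 2 ≤ n) (hF0 : F 0 = 0) {K : ℝ} (hK : 0 < K)
    (hF₁ : ∀ z, ‖iteratedFDeriv ℝ 1 F z‖ ≤ K) (hF₂ : ∀ z, ‖iteratedFDeriv ℝ 2 F z‖ ≤ K)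
    (D : Y ≃L[ℝ] Y) (hD : (D : Y →L[ℝ] Y) = (fderiv ℝ F 0).comp (inr ℝ E Y)) {δ : ℝ}
    (hδ : δ = 1 / (2 * √(1 + (1 + K) ^ 2 * ‖(D.symm : Y →L[ℝ] Y)‖ ^ 2))) :
    ∃ g : E → Y, g 0 = 0 ∧ ∀ x ∈ ball (0 : E) (δ / K * δ / (2 * (K + 1))), F (x, g x) = 0 ∧
      ContDiffAt ℝ n g x ∧ ‖fderiv ℝ g x‖ ≤ K / δ := by
  set b := ‖(D.symm : Y →L[ℝ] Y)‖
  set S := √(1 + (1 + K) ^ 2 * b ^ 2)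
  have hS1 : 1 ≤ S := Real.one_le_sqrt.2 (le_add_of_nonneg_right (by positivity))
  have hbS : b * (1 + K) ≤ S := (Real.le_sqrt (by positivity) (by positivity)).2 (by nlinarith)
  have hδS : 2 * δ * S = 1 := by rw [hδ]; field_simp
  have hδ0 : 0 < δ := by rw [hδ]; positivity
  have hDF : ∀ z, ‖fderiv ℝ F z‖ ≤ K := fun z =>
    norm_fderiv_eq_norm_iteratedFDeriv_one.trans_le (hF₁ z)
  have hδD : 2 * δ * max 1 (b * (1 + ‖fderiv ℝ F 0‖)) ≤ 1 :=
    calc _ ≤ 2 * δ * S := by gcongr; exact max_le hS1 (le_trans (by gcongr; exact hDF 0) hbS)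
      _ = 1 := hδS
  have hF' : ∀ z ∈ ball 0 (δ / K), ‖fderiv ℝ F z - fderiv ℝ F 0‖ ≤ δ := fun z hz =>
    calc _ ≤ K * ‖z - 0‖ :=
          norm_fderiv_sub_le_of_norm_iteratedFDeriv_two_le (hF.of_le hn) hF₂ z 0
      _ ≤ K * (δ / K) := by gcongr; simpa using (mem_ball_zero_iff.1 hz).le
      _ = δ := by field_simp
  obtain ⟨g, hg0, hg⟩ := exists_implicitFunction_of_norm_fderiv_sub_le hF
    (zero_lt_two.trans_le hn).ne' hF0 D hD hδ0.le hδD hF' (ε := δ / K / (2 * (K + 1)))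
    (by positivity) (div_lt_self (by positivity) (by linarith))
  refine ⟨g, hg0, fun x hx => ?_⟩
  obtain ⟨hgF, hg_smooth, hg_deriv⟩ := hg x (by rwa [mul_div_assoc', mul_comm δ])
  refine ⟨hgF, hg_smooth, hg_deriv.trans ?_⟩
  calc 2 * b * ‖fderiv ℝ F (x, g x)‖ ≤ 2 * S * K := by
        gcongr
        exacts [(le_mul_of_one_le_right (norm_nonneg _) (by linarith)).trans hbS, hDF _]
    _ = K / δ := by field_simp; linarith

end Real

/-- Quantitative implicit function theorem: if `F : ℝᵐ × ℝⁿ → ℝⁿ` is `C^k` (`k ≥ 2`)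
with `C^k` norm ≤ `K`, `F(0,0) = 0`, and `∂F/∂y(0,0)` invertible with inverse `B`,
then with `δ = 1/(2(1+(1+K)²‖B‖²)^{1/2})` and `r = δ/K` there is a `C^k` map `g` on
`B(0, rδ/(2(K+1)))` with `g 0 = 0`, `F(x, g x) = 0` and `‖Dg(x)‖ ≤ K/δ`. -/
theorem quantitative_implicit_function_theorem (m n k : ℕ) (hk : 2 ≤ k) (K : ℝ) (hK : 0 < K)
    (F : EuclideanSpace ℝ (Fin m) × EuclideanSpace ℝ (Fin n) → EuclideanSpace ℝ (Fin n))
    (hF : ContDiff ℝ k F) (hF0 : F (0, 0) = 0)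
    (hFK : ∀ p, 1 ≤ p → p ≤ k → ∀ z, ‖iteratedFDeriv ℝ p F z‖ ≤ K)
    (B : EuclideanSpace ℝ (Fin n) →L[ℝ] EuclideanSpace ℝ (Fin n))
    (hB₁ : B.comp (fderiv ℝ (fun y => F (0, y)) 0) = ContinuousLinearMap.id ℝ _)
    (hB₂ : (fderiv ℝ (fun y => F (0, y)) 0).comp B = ContinuousLinearMap.id ℝ _) :
    ∀ δ r ρ : ℝ,
      δ = 1 / (2 * Real.sqrt (1 + (1 + K) ^ 2 * ‖B‖ ^ 2)) →
      r = δ / K → ρ = r * δ / (2 * (K + 1)) →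
    ∃ g : EuclideanSpace ℝ (Fin m) → EuclideanSpace ℝ (Fin n),
      ContDiffOn ℝ k g (ball 0 ρ) ∧ g 0 = 0 ∧
      (∀ x ∈ ball (0 : EuclideanSpace ℝ (Fin m)) ρ, F (x, g x) = 0) ∧
      ∀ x ∈ ball (0 : EuclideanSpace ℝ (Fin m)) ρ,
        ‖fderivWithin ℝ g (ball 0 ρ) x‖ ≤ K / δ := by
  intro δ r ρ hδ hr hρ
  let D := ContinuousLinearEquiv.equivOfInverse' _ B hB₂ hB₁
  have hD : (D : _ →L[ℝ] _) = (fderiv ℝ F 0).comp (inr ℝ _ _) :=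
    ((hF.differentiable (by exact_mod_cast (by omega : k ≠ 0)) 0).hasFDerivAt.comp
      (0 : EuclideanSpace ℝ (Fin n)) (hasFDerivAt_prodMk_right 0 0)).fderiv
  obtain ⟨g, hg0, hg⟩ := exists_implicitFunction_of_norm_iteratedFDeriv_le hF
    (by exact_mod_cast hk) hF0 hK (hFK 1 le_rfl (by omega)) (hFK 2 (by omega) hk) D hD hδ
  rw [← hr, ← hρ] at hg
  refine ⟨g, fun x hx => (hg x hx).2.1.contDiffWithinAt, hg0, fun x hx => (hg x hx).1,
    fun x hx => ?_⟩
  rw [fderivWithin_of_isOpen isOpen_ball hx]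
  exact (hg x hx).2.2
end

section
/- The linear map Φ : Δ(n) → Sym(n) defined by Φ(H) = −(Hᵀ D₀ + D₀ H), where D₀ = diag(±1, …, ±1), is a linear isomorphism from the space of upper triangular n × n matrices onto the space of symmetric n × n matrices. Moreover ‖Φ‖ ≤ 2 and ‖Φ⁻¹‖_F ≤ √(n(n+1)/2) (Frobenius norm bound), hence ‖Φ⁻¹‖ ≤ √(n(n+1)/2). -/
/-!
With `D = diagonal d`, `d i = ±1`, the `(i, j)` entry of `Φ(H) = -(Hᵀ D + D H)` is
`-(d j * H j i + d i * H i j)`. For upper triangular `H` and `i ≤ j` only `H i j` survives, so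
`Φ(H) = G` forces `H i j = -d i * G i j` for `i < j` and `H i i = -d i * G i i / 2`, and this
matrix does solve the equation when `G` is symmetric. Each of its `n(n+1)/2` possibly nonzero
entries is bounded by `|G i j| ≤ ‖G‖`, which bounds its Frobenius norm and hence its operator
norm. The bound `‖Φ‖ ≤ 2` is the triangle inequality together with `‖D‖ ≤ 1`.
-/

open Matrix
open scoped Matrix.Norms.L2Operator
open Finset

lemma Fin.sum_card_Ici_mul_two (n : ℕ) : (∑ i : Fin n, #(Ici i)) * 2 = n * (n + 1) := by
  simp only [Fin.card_Ici]
  rw [Fin.sum_univ_eq_sum_range (fun i ↦ n - i), ← sum_range_reflect,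
    sum_congr rfl fun j hj ↦ show n - (n - 1 - j) = j + 1 by grind]
  simpa [sum_range_succ', mul_comm] using sum_range_id_mul_two (n + 1)

namespace Matrix

lemma neg_transpose_mul_diagonal_add_apply {R n : Type*} [CommRing R] [Fintype n] [DecidableEq n]
    (H : Matrix n n R) (d : n → R) (i j : n) :
    (-(Hᵀ * diagonal d + diagonal d * H)) i j = -(H j i * d j + d i * H i j) := by
  simp

section UpperPreimage

variable {K : Type*} [Field K] {n : Type*} [LinearOrder n]

/-- The upper triangular solution `H` of `-(Hᵀ * diagonal d + diagonal d * H) = G`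
when `d i * d i = 1`. -/
def upperPreimage (d : n → K) (G : Matrix n n K) : Matrix n n K :=
  of fun i j ↦ if i < j then -(d i * G i j) else if i = j then -(d i * G i j) / 2 else 0

lemma blockTriangular_upperPreimage (d : n → K) (G : Matrix n n K) :
    (upperPreimage d G).BlockTriangular id := fun i j (hji : j < i) ↦ by
  simp [upperPreimage, not_lt_of_gt hji, hji.ne']

variable [Fintype n] [NeZero (2 : K)] {d : n → K}

lemma neg_transpose_mul_diagonal_add_upperPreimage (hd : ∀ i, d i * d i = 1) {G : Matrix n n K}
    (hG : G.IsSymm) :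
    -((upperPreimage d G)ᵀ * diagonal d + diagonal d * upperPreimage d G) = G := by
  ext i j
  rw [neg_transpose_mul_diagonal_add_apply]
  rcases lt_trichotomy i j with h | rfl | h
  · simp [upperPreimage, h, not_lt_of_gt h, h.ne']
    linear_combination G i j * hd i
  · simp [upperPreimage]
    field_simp
    linear_combination 2 * G i i * hd i
  · simp [upperPreimage, h, not_lt_of_gt h, h.ne', hG.apply i j]
    linear_combination G i j * hd j

lemma eq_upperPreimage (hd : ∀ i, d i * d i = 1) {H : Matrix n n K} (hH : H.BlockTriangular id) :
    H = upperPreimage d (-(Hᵀ * diagonal d + diagonal d * H)) := by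
  ext i j
  rw [upperPreimage, of_apply, neg_transpose_mul_diagonal_add_apply]
  rcases lt_trichotomy i j with h | rfl | h
  · simp [h, hH h]
    linear_combination (-H i j) * hd i
  · simp only [lt_irrefl, if_false, if_true]
    field_simp
    linear_combination -2 * H i i * hd i
  · simp [not_lt_of_gt h, h.ne', hH h]

end UpperPreimage

section L2OpNorm

variable {𝕜 : Type*} [RCLike 𝕜]

lemma norm_upperPreimage_apply_le {n : Type*} [LinearOrder n] {d : n → 𝕜}
    (hd : ∀ i, d i * d i = 1) (G : Matrix n n 𝕜) (i j : n) :
    ‖upperPreimage d G i j‖ ≤ ‖G i j‖ := by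
  have hdi : ‖d i‖ = 1 := by
    refine (pow_eq_one_iff_of_nonneg (norm_nonneg _) two_ne_zero).mp ?_
    rw [← norm_pow, sq, hd i, norm_one]
  rcases lt_trichotomy i j with h | rfl | h
  · simp [upperPreimage, h, hdi]
  · simp [upperPreimage, hdi]
  · simp [upperPreimage, not_lt_of_gt h, h.ne']

lemma norm_entry_le_l2_opNorm {m n : Type*} [Fintype m] [Fintype n] [DecidableEq n]
    (A : Matrix m n 𝕜) (i : m) (j : n) : ‖A i j‖ ≤ ‖A‖ :=
  calc ‖A i j‖ = ‖(EuclideanSpace.equiv m 𝕜).symm (A *ᵥ Pi.single j 1) i‖ := by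
        simp [mulVec_single]
    _ ≤ ‖(EuclideanSpace.equiv m 𝕜).symm (A *ᵥ Pi.single j 1)‖ := PiLp.norm_apply_le _ i
    _ ≤ ‖A‖ := by
        simpa using A.l2_opNorm_mulVec (EuclideanSpace.single j 1)

lemma l2_opNorm_le_sqrt_sum_norm_sq {m n : Type*} [Fintype m] [Fintype n] [DecidableEq n]
    (A : Matrix m n 𝕜) : ‖A‖ ≤ √(∑ i, ∑ j, ‖A i j‖ ^ 2) := by
  rw [l2_opNorm_def]
  refine ContinuousLinearMap.opNorm_le_bound _ (by positivity) fun x ↦ ?_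
  rw [← Real.sqrt_sq (norm_nonneg x), ← Real.sqrt_mul (by positivity)]
  refine Real.le_sqrt_of_sq_le ?_
  simp only [LinearEquiv.trans_apply, EuclideanSpace.norm_sq_eq]
  rw [sum_mul]
  refine sum_le_sum fun i _ ↦ ?_
  calc ‖(A *ᵥ x) i‖ ^ 2 = ‖∑ j, A i j * x j‖ ^ 2 := rfl
    _ ≤ (∑ j, ‖A i j‖ * ‖x j‖) ^ 2 := by
        gcongr
        exact (norm_sum_le _ _).trans_eq (by simp_rw [norm_mul])
    _ ≤ _ := sum_mul_sq_le_sq_mul_sq _ _ _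

lemma l2_opNorm_le_of_blockTriangular {n : ℕ} {A : Matrix (Fin n) (Fin n) 𝕜}
    (hA : A.BlockTriangular id) {c : ℝ} (hc₀ : 0 ≤ c) (hc : ∀ i j, ‖A i j‖ ≤ c) :
    ‖A‖ ≤ √(n * (n + 1) / 2) * c := by
  have hrow (i : Fin n) : ∑ j, ‖A i j‖ ^ 2 ≤ #(Ici i) * c ^ 2 := by
    have houtside (j : Fin n) (hj : j ∉ Ici i) : ‖A i j‖ ^ 2 = 0 := by
      simp [hA (not_le.mp (mem_Ici.not.mp hj))]
    rw [← sum_subset (subset_univ (Ici i)) fun j _ ↦ houtside j]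
    simpa using sum_le_sum fun j (_ : j ∈ Ici i) ↦ pow_le_pow_left₀ (norm_nonneg _) (hc i j) 2
  have hcount : (∑ i : Fin n, #(Ici i) : ℝ) = n * (n + 1) / 2 := by
    have := congrArg (Nat.cast (R := ℝ)) (Fin.sum_card_Ici_mul_two n)
    push_cast at this
    linarith
  calc ‖A‖ ≤ √(∑ i, ∑ j, ‖A i j‖ ^ 2) := l2_opNorm_le_sqrt_sum_norm_sq A
    _ ≤ √(n * (n + 1) / 2 * c ^ 2) := by
        gcongr
        calc _ ≤ ∑ i : Fin n, (#(Ici i) * c ^ 2 : ℝ) := sum_le_sum fun i _ ↦ hrow i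
          _ = _ := by rw [← sum_mul, hcount]
    _ = √(n * (n + 1) / 2) * c := by
        rw [Real.sqrt_mul (by positivity), Real.sqrt_sq hc₀]

end L2OpNorm

lemma l2_opNorm_transpose {n : Type*} [Fintype n] [DecidableEq n] (A : Matrix n n ℝ) :
    ‖Aᵀ‖ = ‖A‖ := by
  simpa [conjTranspose_eq_transpose_of_trivial] using l2_opNorm_conjTranspose A

lemma l2_opNorm_neg_transpose_mul_add_mul_le {n : Type*} [Fintype n] [DecidableEq n]
    (H D : Matrix n n ℝ) : ‖-(Hᵀ * D + D * H)‖ ≤ 2 * ‖D‖ * ‖H‖ :=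
  calc ‖-(Hᵀ * D + D * H)‖ ≤ ‖Hᵀ‖ * ‖D‖ + ‖D‖ * ‖H‖ := by
        grw [norm_neg, norm_add_le, l2_opNorm_mul, l2_opNorm_mul]
    _ = 2 * ‖D‖ * ‖H‖ := by rw [l2_opNorm_transpose]; ring

end Matrix

/-- The linear map `Φ(H) = −(Hᵀ D₀ + D₀ H)`, with `D₀ = diag(±1,…,±1)`, is a linear
isomorphism from upper triangular `n × n` matrices onto symmetric `n × n` matrices,
with `‖Φ(H)‖ ≤ 2‖H‖` and `‖Φ⁻¹‖ ≤ √(n(n+1)/2)` (operator norms). -/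
theorem upper_triangular_to_symmetric_iso (n : ℕ) (eps : Fin n → ℝ)
    (heps : ∀ i, eps i = 1 ∨ eps i = -1) (D₀ : Matrix (Fin n) (Fin n) ℝ)
    (hD₀ : D₀ = Matrix.diagonal eps) :
    (∀ G : Matrix (Fin n) (Fin n) ℝ, G.IsSymm →
      ∃! H : Matrix (Fin n) (Fin n) ℝ,
        (∀ i j : Fin n, j < i → H i j = 0) ∧ -(Hᵀ * D₀ + D₀ * H) = G) ∧
    (∀ H : Matrix (Fin n) (Fin n) ℝ, (∀ i j : Fin n, j < i → H i j = 0) →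
      ‖-(Hᵀ * D₀ + D₀ * H)‖ ≤ 2 * ‖H‖) ∧
    (∀ G H : Matrix (Fin n) (Fin n) ℝ, G.IsSymm → (∀ i j : Fin n, j < i → H i j = 0) →
      -(Hᵀ * D₀ + D₀ * H) = G →
      ‖H‖ ≤ Real.sqrt (n * (n + 1) / 2) * ‖G‖) := by
  subst hD₀
  have hsq (i : Fin n) : eps i * eps i = 1 := by rcases heps i with h | h <;> simp [h]
  have hD : ‖diagonal eps‖ ≤ 1 := by
    rw [l2_opNorm_diagonal, pi_norm_le_iff_of_nonneg zero_le_one]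
    intro i
    rcases heps i with h | h <;> simp [h]
  refine ⟨fun G hG ↦ ⟨upperPreimage eps G,
      ⟨fun i j h ↦ blockTriangular_upperPreimage eps G h,
        neg_transpose_mul_diagonal_add_upperPreimage hsq hG⟩, ?_⟩, fun H _ ↦ ?_, ?_⟩
  · rintro H ⟨hH, rfl⟩
    exact eq_upperPreimage hsq fun i j h ↦ hH i j h
  · grw [l2_opNorm_neg_transpose_mul_add_mul_le, hD, mul_one]
  · rintro G H - hH rfl
    have hH' : H.BlockTriangular id := fun i j h ↦ hH i j h
    refine l2_opNorm_le_of_blockTriangular hH' (norm_nonneg _) fun i j ↦ ?_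
    calc ‖H i j‖ = ‖upperPreimage eps (-(Hᵀ * diagonal eps + diagonal eps * H)) i j‖ := by
          rw [← eq_upperPreimage hsq hH']
      _ ≤ _ := norm_upperPreimage_apply_le hsq _ i j
      _ ≤ _ := norm_entry_le_l2_opNorm _ i j
end

section
/- (Quantitative Splitting Lemma, structure of the remainder) Let f : U → ℝ be C^k (k ≥ 3) near 0 in ℝᵖ × ℝ^q with f(0) = 0, Df(0) = 0, and the p × p block ∂²f/∂x²(0,0) invertible while rank D²f(0) = p. Suppose g : B(0, δ₁) ⊆ ℝ^q → ℝᵖ is a C^{k−1} map with g(0) = 0 and ∂f/∂x(g(y), y) = 0 for all y. Then α(y) := f(g(y), y) is of class C^k (not merely C^{k−1}), and α(0) = 0, Dα(0) = 0, D²α(0) = 0. -/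
/-!
Envelope argument: since `∂ₓf` vanishes along the graph of `g`, the chain rule gives
`Dα(y) = ∂_y f(g y, y)`, which is `C^{k-1}` because `g` is, so `α` is `C^k`. Differentiating once
more, `D²α(0)(v, w) = D²f(0)((Dg(0) v, v), (0, w))`, while differentiating `∂ₓf(g y, y) = 0` gives
`D²f(0)((Dg(0) v, v), (u, 0)) = 0`. So the row `zᵀ H` of `z = (Dg(0) v, v)` against the Hessian
matrix `H` vanishes on the `x`-columns. As the `x`-block of `H` is invertible, `z ↦ (zᵀ H)|ₓ` has
rank `p = rank H`; by rank–nullity it has the same kernel as `z ↦ zᵀ H`, so the whole row vanishes.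
-/

open Metric Set Filter Topology Module ContinuousLinearMap

namespace Matrix

variable {K m n n' : Type*} [Field K] [Fintype m] [Fintype n] [Fintype n'] [DecidableEq m]

theorem vecMul_eq_zero_of_comp_inl_eq_zero (M : Matrix (m ⊕ n) (m ⊕ n') K)
    (hA : IsUnit M.toBlocks₁₁) (hrank : M.rank = Fintype.card m) {x : m ⊕ n → K}
    (hx : (x ᵥ* M) ∘ Sum.inl = 0) : x ᵥ* M = 0 := by
  set T := M.vecMulLinear
  set P : ((m ⊕ n') → K) →ₗ[K] (m → K) := LinearMap.funLeft K K Sum.inl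
  have hPT : LinearMap.range (P ∘ₗ T) = ⊤ := by
    refine LinearMap.range_eq_top.2 fun y => ?_
    obtain ⟨a, rfl⟩ := vecMul_surjective_iff_isUnit.2 hA y
    refine ⟨Sum.elim a 0, ?_⟩
    conv_lhs => rw [LinearMap.comp_apply, vecMulLinear_apply, ← fromBlocks_toBlocks M,
      vecMul_fromBlocks]
    ext i
    simp [P]
  have hT : finrank K (LinearMap.range T) = Fintype.card m := by
    rw [← hrank, ← rank_transpose, rank, mulVecLin_transpose]
  have hker : LinearMap.ker (P ∘ₗ T) = LinearMap.ker T := by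
    refine (Submodule.eq_of_le_of_finrank_eq (LinearMap.ker_le_ker_comp T P) ?_).symm
    have h₁ := LinearMap.finrank_range_add_finrank_ker T
    have h₂ := LinearMap.finrank_range_add_finrank_ker (P ∘ₗ T)
    rw [hPT, finrank_top, finrank_fintype_fun_eq_card] at h₂
    omega
  have : x ∈ LinearMap.ker (P ∘ₗ T) := hx
  rwa [hker] at this

end Matrix

open Matrix in
theorem LinearMap.eq_zero_of_apply_basis_inl_eq_zero {K V ι κ : Type*} [Field K] [AddCommGroup V]
    [Module K V] [Fintype ι] [Fintype κ] [DecidableEq ι] [DecidableEq κ]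
    (β : Basis (ι ⊕ κ) K V) (B : V →ₗ[K] V →ₗ[K] K)
    (hA : IsUnit (toMatrix₂ β β B).toBlocks₁₁) (hrank : (toMatrix₂ β β B).rank = Fintype.card ι)
    {z : V} (hz : ∀ i, B z (β (.inl i)) = 0) : B z = 0 := by
  have h_apply : ∀ a, B z (β a) = (β.repr z ᵥ* toMatrix₂ β β B) a := by
    intro a
    conv_lhs => rw [← β.sum_repr z]
    simp only [map_sum, map_smul, LinearMap.sum_apply, LinearMap.smul_apply,
      smul_eq_mul, vecMul, dotProduct, toMatrix₂_apply]
  have h := Matrix.vecMul_eq_zero_of_comp_inl_eq_zero _ hA hrank (x := β.repr z)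
    (funext fun i => by simp [← h_apply, hz])
  exact β.ext fun a => by simp [h_apply, h]

section Graph

variable {𝕜 E F G : Type*} [NontriviallyNormedField 𝕜] [NormedAddCommGroup E] [NormedSpace 𝕜 E]
  [NormedAddCommGroup F] [NormedSpace 𝕜 F] [NormedAddCommGroup G] [NormedSpace 𝕜 G]
  {f : E × F → G} {g : F → E} {s : Set F} {x : E} {y : F}

theorem fderiv_comp_prodMk_left (hf : DifferentiableAt 𝕜 f (x, y)) :
    fderiv 𝕜 (fun x => f (x, y)) x = (fderiv 𝕜 f (x, y)).comp (inl 𝕜 E F) :=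
  (hf.hasFDerivAt.comp x (hasFDerivAt_prodMk_left x y)).fderiv

theorem hasFDerivAt_comp_graph (hf : DifferentiableAt 𝕜 f (g y, y))
    (hg : DifferentiableAt 𝕜 g y) :
    HasFDerivAt (fun y => f (g y, y))
      ((fderiv 𝕜 f (g y, y)).comp ((fderiv 𝕜 g y).prod (.id 𝕜 F))) y :=
  hf.hasFDerivAt.comp (f := fun y => (g y, y)) y (hg.hasFDerivAt.prodMk (hasFDerivAt_id y))

theorem hasFDerivAt_comp_graph_of_partial_left_eq_zero (hf : DifferentiableAt 𝕜 f (g y, y))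
    (hg : DifferentiableAt 𝕜 g y) (hx : (fderiv 𝕜 f (g y, y)).comp (inl 𝕜 E F) = 0) :
    HasFDerivAt (fun y => f (g y, y)) ((fderiv 𝕜 f (g y, y)).comp (inr 𝕜 E F)) y := by
  convert hasFDerivAt_comp_graph hf hg using 1
  ext v
  have hv : (fderiv 𝕜 g y v, v) = (fderiv 𝕜 g y v, 0) + (0, v) := by simp
  have hx' : fderiv 𝕜 f (g y, y) (fderiv 𝕜 g y v, 0) = 0 := by
    simpa using congr($hx (fderiv 𝕜 g y v))
  rw [comp_apply, comp_apply, prod_apply, id_apply, hv, map_add, hx', zero_add, inr_apply]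

theorem contDiffOn_comp_graph_of_partial_left_eq_zero {n : ℕ} (hn : 1 ≤ n)
    (hs : IsOpen s) (hf : ContDiff 𝕜 (n + 1) f) (hg : ContDiffOn 𝕜 n g s)
    (hx : ∀ y ∈ s, (fderiv 𝕜 f (g y, y)).comp (inl 𝕜 E F) = 0) :
    ContDiffOn 𝕜 (n + 1) (fun y => f (g y, y)) s := by
  have hfd : Differentiable 𝕜 f := hf.differentiable (by simp)
  have hgd : DifferentiableOn 𝕜 g s :=
    hg.differentiableOn (by exact_mod_cast (Nat.one_pos.trans_le hn).ne')
  have hα : ∀ y ∈ s,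
      HasFDerivAt (fun y => f (g y, y)) ((fderiv 𝕜 f (g y, y)).comp (inr 𝕜 E F)) y :=
    fun y hy => hasFDerivAt_comp_graph_of_partial_left_eq_zero (hfd _)
      (hgd.differentiableAt (hs.mem_nhds hy)) (hx y hy)
  rw [contDiffOn_succ_iff_fderiv_of_isOpen hs]
  refine ⟨fun y hy => (hα y hy).differentiableAt.differentiableWithinAt, by simp, ?_⟩
  refine ContDiffOn.congr ?_ fun y hy => (hα y hy).fderiv
  exact ((hf.fderiv_right le_rfl).comp_contDiffOn (hg.prodMk contDiffOn_id)).clm_comp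
      contDiffOn_const

theorem fderiv_fderiv_comp_graph_apply_inl_eq_zero
    (hf : DifferentiableAt 𝕜 (fderiv 𝕜 f) (g y, y)) (hg : DifferentiableAt 𝕜 g y)
    (hx : ∀ᶠ y' in 𝓝 y, (fderiv 𝕜 f (g y', y')).comp (inl 𝕜 E F) = 0) (v : F) (u : E) :
    fderiv 𝕜 (fderiv 𝕜 f) (g y, y) (fderiv 𝕜 g y v, v) (u, 0) = 0 := by
  have h : HasFDerivAt (fun y => precomp G (inl 𝕜 E F) (fderiv 𝕜 f (g y, y))) _ y :=
    (precomp G (inl 𝕜 E F)).hasFDerivAt.comp y (hasFDerivAt_comp_graph hf hg)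
  have h₀ : HasFDerivAt (fun y => precomp G (inl 𝕜 E F) (fderiv 𝕜 f (g y, y)))
      (0 : F →L[𝕜] E →L[𝕜] G) y :=
    (hasFDerivAt_const 0 y).congr_of_eventuallyEq (hx.mono fun _ h => by simpa using h)
  simpa using congr($(h.unique h₀) v u)

theorem iteratedFDerivWithin_two_comp_graph_apply (hs : IsOpen s) (hy : y ∈ s)
    (hf : ContDiff 𝕜 2 f) (hg : DifferentiableOn 𝕜 g s)
    (hx : ∀ y ∈ s, (fderiv 𝕜 f (g y, y)).comp (inl 𝕜 E F) = 0) (m : Fin 2 → F) :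
    iteratedFDerivWithin 𝕜 2 (fun y => f (g y, y)) s y m =
      fderiv 𝕜 (fderiv 𝕜 f) (g y, y) (fderiv 𝕜 g y (m 0), m 0) (0, m 1) := by
  have hfd : Differentiable 𝕜 f := hf.differentiable (by simp)
  have hf' : Differentiable 𝕜 (fderiv 𝕜 f) :=
    (hf.fderiv_right (m := 1) (by norm_num)).differentiable one_ne_zero
  have hgd : ∀ y ∈ s, DifferentiableAt 𝕜 g y := fun y hy => hg.differentiableAt (hs.mem_nhds hy)
  have e : EqOn (fderivWithin 𝕜 (fun y => f (g y, y)) s)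
      (fun y => precomp G (inr 𝕜 E F) (fderiv 𝕜 f (g y, y))) s := fun y hy =>
    (fderivWithin_of_isOpen hs hy).trans
      (hasFDerivAt_comp_graph_of_partial_left_eq_zero (hfd _) (hgd y hy) (hx y hy)).fderiv
  have h : HasFDerivAt (fun y => precomp G (inr 𝕜 E F) (fderiv 𝕜 f (g y, y))) _ y :=
    (precomp G (inr 𝕜 E F)).hasFDerivAt.comp y
      (hasFDerivAt_comp_graph (hf' _) (hgd y hy))
  rw [iteratedFDerivWithin_two_apply _ hs.uniqueDiffOn hy, fderivWithin_congr e (e hy),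
    fderivWithin_of_isOpen hs hy, h.fderiv]
  simp

theorem iteratedFDerivWithin_two_comp_graph_eq_zero {ι κ : Type*} [Fintype ι] [Fintype κ]
    [DecidableEq ι] [DecidableEq κ] {f : E × F → 𝕜} (bE : Basis ι 𝕜 E) (bF : Basis κ 𝕜 F)
    (hs : IsOpen s) (hy : y ∈ s) (hf : ContDiff 𝕜 2 f) (hg : DifferentiableOn 𝕜 g s)
    (hx : ∀ y ∈ s, (fderiv 𝕜 f (g y, y)).comp (inl 𝕜 E F) = 0)
    (hA : IsUnit (LinearMap.toMatrix₂ (bE.prod bF) (bE.prod bF)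
      (fderiv 𝕜 (fderiv 𝕜 f) (g y, y)).toLinearMap₁₂).toBlocks₁₁)
    (hrank : (LinearMap.toMatrix₂ (bE.prod bF) (bE.prod bF)
      (fderiv 𝕜 (fderiv 𝕜 f) (g y, y)).toLinearMap₁₂).rank = Fintype.card ι) :
    iteratedFDerivWithin 𝕜 2 (fun y => f (g y, y)) s y = 0 := by
  ext m
  rw [iteratedFDerivWithin_two_comp_graph_apply hs hy hf hg hx]
  have hf' : Differentiable 𝕜 (fderiv 𝕜 f) :=
    (hf.fderiv_right (m := 1) (by norm_num)).differentiable one_ne_zero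
  have hHx : ∀ i, fderiv 𝕜 (fderiv 𝕜 f) (g y, y) (fderiv 𝕜 g y (m 0), m 0)
      (bE.prod bF (.inl i)) = 0 := fun i => by
    simpa using fderiv_fderiv_comp_graph_apply_inl_eq_zero (hf' _)
      (hg.differentiableAt (hs.mem_nhds hy)) (eventually_of_mem (hs.mem_nhds hy) hx) (m 0) (bE i)
  have hH := LinearMap.eq_zero_of_apply_basis_inl_eq_zero _ _ hA hrank hHx
  simpa using congr($hH (0, m 1))

end Graph

/-- Splitting lemma, structure of the remainder: if `f` is `C^k` (`k ≥ 3`) near `0`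
in `ℝᵖ × ℝ^q` with `f(0) = 0`, `Df(0) = 0`, the `x`-block of the Hessian invertible
and `rank D²f(0) = p`, and `g` is a `C^{k-1}` map with `g(0) = 0` and
`∂f/∂x(g(y), y) = 0`, then `α(y) = f(g(y), y)` is of class `C^k` (not merely
`C^{k-1}`) with `α(0) = 0`, `Dα(0) = 0`, `D²α(0) = 0`. -/
theorem splitting_lemma_remainder (p q k : ℕ) (hk : 3 ≤ k)
    (f : EuclideanSpace ℝ (Fin p) × EuclideanSpace ℝ (Fin q) → ℝ)
    (hf : ContDiff ℝ k f) (hf0 : f 0 = 0) (hDf0 : fderiv ℝ f 0 = 0)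
    (Hm : Matrix (Fin p ⊕ Fin q) (Fin p ⊕ Fin q) ℝ)
    (hHm : ∀ a b : Fin p ⊕ Fin q, Hm a b =
      iteratedFDeriv ℝ 2 f 0
        ![Sum.elim
            (fun i => ((EuclideanSpace.single i 1 : EuclideanSpace ℝ (Fin p)),
              (0 : EuclideanSpace ℝ (Fin q))))
            (fun j => (0, EuclideanSpace.single j 1)) a,
          Sum.elim
            (fun i => ((EuclideanSpace.single i 1 : EuclideanSpace ℝ (Fin p)),
              (0 : EuclideanSpace ℝ (Fin q))))
            (fun j => (0, EuclideanSpace.single j 1)) b])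
    (hrank : Hm.rank = p) (hblock : IsUnit (Matrix.toBlocks₁₁ Hm))
    (δ₁ : ℝ) (hδ₁ : 0 < δ₁)
    (g : EuclideanSpace ℝ (Fin q) → EuclideanSpace ℝ (Fin p))
    (hg : ContDiffOn ℝ (k - 1) g (ball 0 δ₁)) (hg0 : g 0 = 0)
    (hgx : ∀ y ∈ ball (0 : EuclideanSpace ℝ (Fin q)) δ₁,
      fderiv ℝ (fun x => f (x, y)) (g y) = 0) :
    ContDiffOn ℝ k (fun y => f (g y, y)) (ball 0 δ₁) ∧
    f (g 0, 0) = 0 ∧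
    fderivWithin ℝ (fun y => f (g y, y)) (ball 0 δ₁) 0 = 0 ∧
    iteratedFDerivWithin ℝ 2 (fun y => f (g y, y)) (ball 0 δ₁) 0 = 0 := by
  set s := ball (0 : EuclideanSpace ℝ (Fin q)) δ₁
  have hs : IsOpen s := isOpen_ball
  have h0s : (0 : EuclideanSpace ℝ (Fin q)) ∈ s := mem_ball_self hδ₁
  have hk₁ : ((k : WithTop ℕ∞) - 1) = ((k - 1 : ℕ) : WithTop ℕ∞) := by norm_cast
  rw [hk₁] at hg
  have hf₂ : ContDiff ℝ 2 f := hf.of_le (by exact_mod_cast (by omega : 2 ≤ k))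
  have hfd : Differentiable ℝ f := hf₂.differentiable two_ne_zero
  have hgd : DifferentiableOn ℝ g s :=
    hg.differentiableOn (by exact_mod_cast (by omega : k - 1 ≠ 0))
  have hpartial : ∀ y ∈ s, (fderiv ℝ f (g y, y)).comp (inl ℝ _ _) = 0 := fun y hy =>
    (fderiv_comp_prodMk_left (hfd _)).symm.trans (hgx y hy)
  refine ⟨?_, by rw [hg0]; exact hf0, ?_, ?_⟩
  · have hk₂ : ((k - 1 : ℕ) : WithTop ℕ∞) + 1 = k := by norm_cast; omega
    rw [← hk₂] at hf ⊢
    exact contDiffOn_comp_graph_of_partial_left_eq_zero (by omega) hs hf hg hpartial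
  · rw [fderivWithin_of_isOpen hs h0s, (hasFDerivAt_comp_graph_of_partial_left_eq_zero
      (hfd _) (hgd.differentiableAt (hs.mem_nhds h0s))
      (hpartial 0 h0s)).fderiv, hg0, Prod.mk_zero_zero, hDf0, zero_comp]
  · let β : Basis (Fin p ⊕ Fin q) ℝ (EuclideanSpace ℝ (Fin p) × EuclideanSpace ℝ (Fin q)) :=
      (EuclideanSpace.basisFun (Fin p) ℝ).toBasis.prod (EuclideanSpace.basisFun (Fin q) ℝ).toBasis
    have hHmat :
        Hm = LinearMap.toMatrix₂ β β (fderiv ℝ (fderiv ℝ f) (g 0, 0)).toLinearMap₁₂ := by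
      ext a b
      rw [hHm, LinearMap.toMatrix₂_apply, iteratedFDeriv_two_apply, hg0, Prod.mk_zero_zero]
      cases a <;> cases b <;> simp [β]
    exact iteratedFDerivWithin_two_comp_graph_eq_zero _ _ hs h0s hf₂ hgd hpartial
      (hHmat ▸ hblock) (by rw [← hHmat, hrank, Fintype.card_fin])
end
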